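/- arXiv:0810.4558 — 4 statements merged into one kernel-verified Lean document; each statement's English description precedes it below -/
import Mathlib

section
/- Let L be a TD-operator acting on C[x], where C[x] is densely and injectively embedded in a Hilbert space H, and suppose L with domain C[x] is symmetric on H. Then there exists a sequence of monic polynomials {r_n} with deg(r_n) = n, pairwise orthogonal in H, such that L is tridiagonal with respect to {r_n}, i.e. L r_n ∈ span{r_{n-1}, r_n, r_{n+1}}. -/
/-!
Gram–Schmidt applied to the images `ι (X ^ n)` in `H` produces an orthogonal family whose
preimages `r n` are monic of degree `n`, with `r 0, …, r (n - 1)` spanning the polynomials of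
degree `< n`. A TD-operator raises degrees by at most one, so `L (r n)` is a combination of
`r 0, …, r (n + 1)`. For `m + 2 ≤ n`, symmetry gives `⟪r m, L (r n)⟫ = ⟪L (r m), r n⟫ = 0`
because `L (r m)` has degree `< n`; hence only `r (n - 1)`, `r n`, `r (n + 1)` survive.
-/

open Polynomial Submodule

section GramSchmidt

open InnerProductSpace

variable {𝕜 E κ : Type*} [RCLike 𝕜] [NormedAddCommGroup E] [InnerProductSpace 𝕜 E]

theorem inner_gramSchmidt_eq_zero_of_mem_span [LinearOrder κ] [LocallyFiniteOrderBot κ]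
    [WellFoundedLT κ] (f : κ → E) {n : κ} {v : E} (hv : v ∈ span 𝕜 (f '' Set.Iio n)) :
    inner 𝕜 (gramSchmidt 𝕜 f n) v = 0 := by
  have hle : span 𝕜 (f '' Set.Iio n) ≤ (𝕜 ∙ gramSchmidt 𝕜 f n)ᗮ := by
    refine span_le.mpr ?_
    rintro _ ⟨i, hi, rfl⟩
    exact mem_orthogonal_singleton_iff_inner_right.mpr (gramSchmidt_inv_triangular 𝕜 f hi)
  exact mem_orthogonal_singleton_iff_inner_right.mp (hle hv)

theorem mem_span_image_of_inner_eq_zero {e : κ → E}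
    (he : Pairwise fun i j => inner 𝕜 (e i) (e j) = 0) {s t : Set κ} {v : E}
    (hv : v ∈ span 𝕜 (e '' s)) (hvt : ∀ i ∈ s \ t, inner 𝕜 (e i) v = 0) :
    v ∈ span 𝕜 (e '' t) := by
  set K := span 𝕜 (e '' (s \ t))
  rw [← Set.inter_union_sdiff s t, Set.image_union, span_union] at hv
  obtain ⟨a, ha, b, hb, rfl⟩ := mem_sup.mp hv
  have ha' : a ∈ Kᗮ := by
    refine (isOrtho_span.mpr ?_) ha
    rintro _ ⟨u, hu, rfl⟩ _ ⟨w, hw, rfl⟩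
    exact he fun h => hw.2 (h ▸ hu.2)
  have hv' : a + b ∈ Kᗮ :=
    (isOrtho_span.mpr (by rintro _ ⟨i, hi, rfl⟩ _ rfl; exact hvt i hi)).symm (subset_span rfl)
  have hb0 : b ∈ K ⊓ Kᗮ := ⟨hb, by simpa using sub_mem hv' ha'⟩
  rw [inf_orthogonal_eq_bot, mem_bot] at hb0
  rw [hb0, add_zero]
  exact span_mono (Set.image_mono Set.inter_subset_right) ha

end GramSchmidt

section DegreeRaising

variable {R : Type*} [Semiring R]

theorem degreeLT_le_comap_of_X_pow_mem {L : R[X] →ₗ[R] R[X]}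
    (hL : ∀ k : ℕ, L (X ^ k) ∈ degreeLT R (k + 2)) (n : ℕ) :
    degreeLT R n ≤ (degreeLT R (n + 1)).comap L := by
  classical
  rw [degreeLT_eq_span_X_pow, span_le, Finset.coe_image]
  rintro _ ⟨k, hk, rfl⟩
  exact degreeLT_mono (Nat.succ_le_succ (Finset.mem_range.mp hk)) (hL k)

theorem natDegree_mul_smul_X_pow_sub_le {P : R[X]} {c : R} {j k : ℕ}
    (hP : P.natDegree ≤ j + 1) (hc : k < j → c = 0) :
    (P * c • X ^ (k - j)).natDegree ≤ k + 1 := by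
  by_cases hkj : k < j
  · simp [hc hkj]
  · refine (natDegree_mul_le).trans ?_
    have := (natDegree_smul_le c (X ^ (k - j) : R[X])).trans (natDegree_X_pow_le (k - j))
    omega

theorem tdOperator_X_pow_mem_degreeLT {S T L : R[X] →ₗ[R] R[X]} {d d' : ℕ → R}
    (hS : ∀ k : ℕ, S (X ^ k) = d k • X ^ (k - 1)) (hd0 : d 0 = 0)
    (hT : ∀ k : ℕ, T (X ^ k) = d' k • X ^ (k - 2)) (hd'0 : d' 0 = 0) (hd'1 : d' 1 = 0)
    {A B C : R[X]} (hA : A.degree ≤ 3) (hB : B.degree ≤ 2) (hC : C.degree ≤ 1)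
    (hL : ∀ p : R[X], L p = A * T p + B * S p + C * p) (k : ℕ) :
    L (X ^ k) ∈ degreeLT R (k + 2) := by
  have hTk : (A * T (X ^ k)).natDegree ≤ k + 1 := by
    rw [hT]
    refine natDegree_mul_smul_X_pow_sub_le (natDegree_le_of_degree_le hA) fun hk => ?_
    interval_cases k <;> assumption
  have hSk : (B * S (X ^ k)).natDegree ≤ k + 1 := by
    rw [hS]
    refine natDegree_mul_smul_X_pow_sub_le (natDegree_le_of_degree_le hB) fun hk => ?_
    rwa [Nat.lt_one_iff.mp hk]
  have hCk : (C * X ^ k).natDegree ≤ k + 1 := by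
    have : C.natDegree ≤ 1 := natDegree_le_of_degree_le hC
    exact natDegree_mul_le.trans (by have := natDegree_X_pow_le (R := R) k; omega)
  rw [mem_degreeLT, hL]
  refine (degree_le_of_natDegree_le ?_).trans_lt (by exact_mod_cast (k + 1).lt_succ_self)
  exact (natDegree_add_le _ _).trans (max_le ((natDegree_add_le _ _).trans (max_le hTk hSk)) hCk)

end DegreeRaising

section OrthogonalPolynomials

open InnerProductSpace

variable {𝕜 H : Type*} [RCLike 𝕜] [NormedAddCommGroup H] [InnerProductSpace 𝕜 H]
  (ι : 𝕜[X] →ₗ[𝕜] H)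

theorem map_degreeLT_eq_span_gramSchmidt (n : ℕ) :
    (degreeLT 𝕜 n).map ι = span 𝕜 (gramSchmidt 𝕜 (fun k => ι (X ^ k)) '' Set.Iio n) := by
  classical
  rw [span_gramSchmidt_Iio, degreeLT_eq_span_X_pow, map_span, Finset.coe_image,
    Finset.coe_range, ← Set.image_comp]
  rfl

theorem exists_gramSchmidt_eq_map :
    ∃ r : ℕ → 𝕜[X], ∀ n, ι (r n) = gramSchmidt 𝕜 (fun k => ι (X ^ k)) n := by
  have hrange : span 𝕜 (Set.range fun k => ι (X ^ k)) ≤ LinearMap.range ι :=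
    span_le.mpr (Set.range_subset_iff.mpr fun k => ⟨X ^ k, rfl⟩)
  have hmem : ∀ n, ∃ p, ι p = gramSchmidt 𝕜 (fun k => ι (X ^ k)) n := fun n =>
    hrange (span_mono (Set.image_subset_range _ _) (gramSchmidt_mem_span 𝕜 _ le_rfl))
  exact ⟨fun n => (hmem n).choose, fun n => (hmem n).choose_spec⟩

variable {ι} (hinj : Function.Injective ι) {r : ℕ → 𝕜[X]}
  (hr : ∀ n, ι (r n) = gramSchmidt 𝕜 (fun k => ι (X ^ k)) n)
include hinj hr

theorem sub_X_pow_mem_degreeLT (n : ℕ) : r n - X ^ n ∈ degreeLT 𝕜 n := by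
  have hmem : ι (r n - X ^ n) ∈ (degreeLT 𝕜 n).map ι := by
    rw [map_degreeLT_eq_span_gramSchmidt, map_sub, hr, gramSchmidt_def 𝕜 _ n, sub_sub_cancel_left]
    refine neg_mem (sum_mem fun i hi => ?_)
    refine span_mono ?_ (starProjection_apply_mem _ _)
    exact Set.singleton_subset_iff.mpr ⟨i, Finset.mem_Iio.mp hi, rfl⟩
  obtain ⟨q, hq, hιq⟩ := hmem
  exact hinj hιq ▸ hq

theorem monic_of_map_eq_gramSchmidt (n : ℕ) : (r n).Monic := by
  simpa using monic_X_pow_add (mem_degreeLT.mp (sub_X_pow_mem_degreeLT hinj hr n))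

theorem degree_eq_of_map_eq_gramSchmidt (n : ℕ) : (r n).degree = n := by
  have hlow := mem_degreeLT.mp (sub_X_pow_mem_degreeLT hinj hr n)
  rw [← add_sub_cancel (X ^ n) (r n),
    degree_add_eq_left_of_degree_lt (by rwa [degree_X_pow]), degree_X_pow]

theorem mem_span_image_Icc_of_symmetric {L : 𝕜[X] →ₗ[𝕜] 𝕜[X]}
    (hL : ∀ n, degreeLT 𝕜 n ≤ (degreeLT 𝕜 (n + 1)).comap L)
    (hsym : ∀ p q, inner 𝕜 (ι (L p)) (ι q) = inner 𝕜 (ι p) (ι (L q))) (n : ℕ) :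
    L (r n) ∈ span 𝕜 (r '' Set.Icc (n - 1) (n + 1)) := by
  have hLr : ∀ m, L (r m) ∈ degreeLT 𝕜 (m + 2) := fun m =>
    hL (m + 1) (mem_degreeLT.mpr <| by
      rw [degree_eq_of_map_eq_gramSchmidt hinj hr]; exact_mod_cast m.lt_succ_self)
  have hv : ι (L (r n)) ∈ span 𝕜 (gramSchmidt 𝕜 (fun k => ι (X ^ k)) '' Set.Iio (n + 2)) :=
    map_degreeLT_eq_span_gramSchmidt ι (n + 2) ▸ mem_map_of_mem (hLr n)
  have hvt : ∀ i ∈ Set.Iio (n + 2) \ Set.Icc (n - 1) (n + 1),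
      inner 𝕜 (gramSchmidt 𝕜 (fun k => ι (X ^ k)) i) (ι (L (r n))) = 0 := by
    rintro i ⟨hin, hi⟩
    replace hin : i + 2 ≤ n := by simp only [Set.mem_Iio, Set.mem_Icc] at hin hi; omega
    rw [← hr, ← hsym, ← inner_conj_symm, hr, inner_gramSchmidt_eq_zero_of_mem_span, map_zero]
    rw [← span_gramSchmidt_Iio, ← map_degreeLT_eq_span_gramSchmidt]
    exact mem_map_of_mem (degreeLT_mono hin (hLr i))
  have hmem := mem_span_image_of_inner_eq_zero (gramSchmidt_pairwise_orthogonal 𝕜 _) hv hvt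
  rw [← funext hr, ← Set.image_image, ← map_span] at hmem
  obtain ⟨q, hq, hιq⟩ := hmem
  exact hinj hιq ▸ hq

end OrthogonalPolynomials

theorem stmt_1_general
    {H : Type*} [NormedAddCommGroup H] [InnerProductSpace ℂ H]
    (ι : Polynomial ℂ →ₗ[ℂ] H) (hinj : Function.Injective ι)
    (S T : Polynomial ℂ →ₗ[ℂ] Polynomial ℂ) (d d' : ℕ → ℂ)
    (hS : ∀ k : ℕ, S (X ^ k) = d k • X ^ (k - 1))
    (hd0 : d 0 = 0)
    (hT : ∀ k : ℕ, T (X ^ k) = d' k • X ^ (k - 2))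
    (hd'0 : d' 0 = 0) (hd'1 : d' 1 = 0)
    (A B C : Polynomial ℂ)
    (hA : A.degree ≤ 3) (hB : B.degree ≤ 2) (hC : C.degree ≤ 1)
    (L : Polynomial ℂ →ₗ[ℂ] Polynomial ℂ)
    (hL : ∀ p : Polynomial ℂ, L p = A * T p + B * S p + C * p)
    (hsym : ∀ p q : Polynomial ℂ, inner ℂ (ι (L p)) (ι q) = (inner ℂ (ι p) (ι (L q)) : ℂ)) :
    ∃ r : ℕ → Polynomial ℂ,
      (∀ n : ℕ, (r n).Monic ∧ (r n).degree = n) ∧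
      (∀ m n : ℕ, m ≠ n → (inner ℂ (ι (r m)) (ι (r n)) : ℂ) = 0) ∧
      (∀ n : ℕ, 1 ≤ n →
        L (r n) ∈ Submodule.span ℂ ({r (n - 1), r n, r (n + 1)} : Set (Polynomial ℂ))) ∧
      L (r 0) ∈ Submodule.span ℂ ({r 0, r 1} : Set (Polynomial ℂ)) := by
  obtain ⟨r, hr⟩ := exists_gramSchmidt_eq_map ι
  have hdeg := degreeLT_le_comap_of_X_pow_mem
    (tdOperator_X_pow_mem_degreeLT hS hd0 hT hd'0 hd'1 hA hB hC hL)
  have hIcc : ∀ n : ℕ, Set.Icc (n - 1) (n + 1) = {n - 1, n, n + 1} := fun n => by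
    ext i
    simp only [Set.mem_Icc, Set.mem_insert_iff, Set.mem_singleton_iff]
    omega
  have htri : ∀ n, L (r n) ∈ span ℂ {r (n - 1), r n, r (n + 1)} := fun n => by
    simpa only [hIcc, Set.image_insert_eq, Set.image_singleton] using
      mem_span_image_Icc_of_symmetric hinj hr hdeg hsym n
  refine ⟨r, fun n => ⟨monic_of_map_eq_gramSchmidt hinj hr n,
    degree_eq_of_map_eq_gramSchmidt hinj hr n⟩, fun m n hmn => ?_, fun n _ => htri n, ?_⟩
  · rw [hr, hr]
    exact InnerProductSpace.gramSchmidt_orthogonal ℂ _ hmn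
  · simpa only [Nat.zero_sub, zero_add, Set.insert_idem] using htri 0

/-- A symmetric TD-operator on `ℂ[x] ⊆ H` can be tridiagonalized by a family of
pairwise orthogonal monic polynomials. -/
theorem stmt_1
    {H : Type*} [NormedAddCommGroup H] [InnerProductSpace ℂ H]
    (ι : Polynomial ℂ →ₗ[ℂ] H) (hinj : Function.Injective ι)
    (hdense : Dense (Submodule.span ℂ (Set.range ι) : Set H))
    (S T : Polynomial ℂ →ₗ[ℂ] Polynomial ℂ) (d d' : ℕ → ℂ)
    (hS : ∀ k : ℕ, S (X ^ k) = d k • X ^ (k - 1))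
    (hd0 : d 0 = 0) (hd : ∀ k : ℕ, 1 ≤ k → d k ≠ 0)
    (hT : ∀ k : ℕ, T (X ^ k) = d' k • X ^ (k - 2))
    (hd'0 : d' 0 = 0) (hd'1 : d' 1 = 0) (hd' : ∀ k : ℕ, 2 ≤ k → d' k ≠ 0)
    (A B C : Polynomial ℂ)
    (hA : A.degree ≤ 3) (hB : B.degree ≤ 2) (hC : C.degree ≤ 1)
    (L : Polynomial ℂ →ₗ[ℂ] Polynomial ℂ)
    (hL : ∀ p : Polynomial ℂ, L p = A * T p + B * S p + C * p)
    (hsym : ∀ p q : Polynomial ℂ, inner ℂ (ι (L p)) (ι q) = (inner ℂ (ι p) (ι (L q)) : ℂ)) :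
    ∃ r : ℕ → Polynomial ℂ,
      (∀ n : ℕ, (r n).Monic ∧ (r n).degree = n) ∧
      (∀ m n : ℕ, m ≠ n → (inner ℂ (ι (r m)) (ι (r n)) : ℂ) = 0) ∧
      (∀ n : ℕ, 1 ≤ n →
        L (r n) ∈ Submodule.span ℂ ({r (n - 1), r n, r (n + 1)} : Set (Polynomial ℂ))) ∧
      L (r 0) ∈ Submodule.span ℂ ({r 0, r 1} : Set (Polynomial ℂ)) :=
  stmt_1_general ι hinj S T d d' hS hd0 hT hd'0 hd'1 A B C hA hB hC L hL hsym
end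

section
/- Fix b > 0, b ∉ 1/2 + ℕ, N = ⌊b + 1/2⌋, and let L = M_A d²/dz² + M_B d/dz + M_C with A(z) = −z², B(z) = (2N − 2b − 2 + z)z, C(z) = −(N − b − 1/2)² + z(1 − N). Then the Laguerre polynomials L_n^{(2b−2N)} tridiagonalize L: L L_n^{(2b−2N)} is a linear combination of L_{n+1}^{(2b−2N)}, L_n^{(2b−2N)}, L_{n−1}^{(2b−2N)} with coefficients −(1−N+n)(n+1), −(N−b−1/2)² + (1−N+n)(2n+2b−2N+1) − n, and −(n−N)(2b−2N+n) respectively (in the monic normalization of the tridiagonal relation adapted to standard Laguerre normalization). -/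
/-!
Multiplying the Laguerre equation by `-z` turns the second-order part of `L` into
`n z y - z y'`, so `L y = (n + m) z y - z y' + c y` when `C(z) = c + m z`. The three-term
recurrence and the differential-recursion relation express `z y` and `z y'` through
`L_{n+1}`, `L_n`, `L_{n-1}`, which gives the tridiagonal relation for arbitrary `c`, `m`;
the theorem is the case `c = -(N - b - 1/2)²`, `m = 1 - N`.
-/

open Polynomial

section
variable {R : Type*} [CommRing R] (α n : R) {y yPrev yNext : R[X]}

theorem laguerre_ode_mul_neg_X
    (hode : X * derivative (derivative y) + (C (α + 1) - X) * derivative y + n • y = 0) :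
    -X ^ 2 * derivative (derivative y) + (C (-(α + 2)) + X) * X * derivative y
      = n • (X * y) - X * derivative y := by
  simp only [smul_eq_C_mul, map_add, map_neg, map_one, map_ofNat] at hode ⊢
  linear_combination (-X) * hode

theorem laguerre_tridiagonal (c m : R)
    (hode : X * derivative (derivative y) + (C (α + 1) - X) * derivative y + n • y = 0)
    (hrec : (n + 1) • yNext = (C (2 * n + α + 1) - X) * y - (n + α) • yPrev)
    (hder : X * derivative y = n • y - (n + α) • yPrev) :
    -X ^ 2 * derivative (derivative y) + (C (-(α + 2)) + X) * X * derivative y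
        + (C c + m • X) * y
      = (-(m + n) * (n + 1)) • yNext + (c + (m + n) * (2 * n + α + 1) - n) • y
        + ((1 - n - m) * (n + α)) • yPrev := by
  rw [laguerre_ode_mul_neg_X α n hode]
  simp only [smul_eq_C_mul, map_add, map_sub, map_mul, map_neg, map_one, map_ofNat] at hrec hder ⊢
  linear_combination (C m + C n) * hrec - hder
end

theorem stmt_11_general
    (b : ℝ)
    (N : ℕ)
    (α : ℝ) (hα : α = 2 * b - 2 * N)
    (Lag : ℕ → Polynomial ℝ)
    -- the Laguerre differential equation z y'' + (α+1-z) y' + n y = 0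
    (hode : ∀ n : ℕ,
      X * derivative (derivative (Lag n)) + (Polynomial.C (α + 1) - X) * derivative (Lag n)
        + (n : ℝ) • Lag n = 0)
    -- the three-term recurrence
    (hrec : ∀ n : ℕ, 1 ≤ n →
      ((n : ℝ) + 1) • Lag (n + 1)
        = (Polynomial.C (2 * n + α + 1) - X) * Lag n - ((n : ℝ) + α) • Lag (n - 1))
    -- the differential-recursion relation
    (hder : ∀ n : ℕ, 1 ≤ n →
      X * derivative (Lag n) = (n : ℝ) • Lag n - ((n : ℝ) + α) • Lag (n - 1))
    (Lop : Polynomial ℝ → Polynomial ℝ)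
    (hLop : ∀ p : Polynomial ℝ,
      Lop p = (-X ^ 2) * derivative (derivative p)
        + ((Polynomial.C (2 * N - 2 * b - 2) + X) * X) * derivative p
        + (Polynomial.C (-((N : ℝ) - b - 1 / 2) ^ 2) + (1 - (N : ℝ)) • X) * p) :
    ∀ n : ℕ, 1 ≤ n →
      Lop (Lag n)
        = (-(1 - (N : ℝ) + n) * (n + 1)) • Lag (n + 1)
          + (-((N : ℝ) - b - 1 / 2) ^ 2 + (1 - (N : ℝ) + n) * (2 * n + 2 * b - 2 * N + 1) - n)
            • Lag n
          + (-((n : ℝ) - N) * (2 * b - 2 * N + n)) • Lag (n - 1) := by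
  intro n hn
  have key := laguerre_tridiagonal α n (-((N : ℝ) - b - 1 / 2) ^ 2) (1 - N)
    (hode n) (hrec n hn) (hder n hn)
  subst hα
  rw [hLop]
  convert key using 3
  · congr 4; ring
  · congr 1; ring
  · ring

/-- The Laguerre polynomials `L_n^{(2b-2N)}` (characterized by their differential
equation, three-term recurrence and differential-recursion relation) tridiagonalize
`L = M_A d²/dz² + M_B d/dz + M_C` with `A(z) = -z²`, `B(z) = (2N-2b-2+z)z`,
`C(z) = -(N-b-1/2)² + z(1-N)`. -/
theorem stmt_11
    (b : ℝ) (hb : 0 < b) (hbhalf : ¬∃ n : ℕ, b = 1 / 2 + n)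
    (N : ℕ) (hN : N = Nat.floor (b + 1 / 2))
    (α : ℝ) (hα : α = 2 * b - 2 * N)
    (Lag : ℕ → Polynomial ℝ)
    -- the Laguerre differential equation z y'' + (α+1-z) y' + n y = 0
    (hode : ∀ n : ℕ,
      X * derivative (derivative (Lag n)) + (Polynomial.C (α + 1) - X) * derivative (Lag n)
        + (n : ℝ) • Lag n = 0)
    -- the three-term recurrence
    (hrec : ∀ n : ℕ, 1 ≤ n →
      ((n : ℝ) + 1) • Lag (n + 1)
        = (Polynomial.C (2 * n + α + 1) - X) * Lag n - ((n : ℝ) + α) • Lag (n - 1))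
    -- the differential-recursion relation
    (hder : ∀ n : ℕ, 1 ≤ n →
      X * derivative (Lag n) = (n : ℝ) • Lag n - ((n : ℝ) + α) • Lag (n - 1))
    (Lop : Polynomial ℝ → Polynomial ℝ)
    (hLop : ∀ p : Polynomial ℝ,
      Lop p = (-X ^ 2) * derivative (derivative p)
        + ((Polynomial.C (2 * N - 2 * b - 2) + X) * X) * derivative p
        + (Polynomial.C (-((N : ℝ) - b - 1 / 2) ^ 2) + (1 - (N : ℝ)) • X) * p) :
    ∀ n : ℕ, 1 ≤ n →
      Lop (Lag n)
        = (-(1 - (N : ℝ) + n) * (n + 1)) • Lag (n + 1)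
          + (-((N : ℝ) - b - 1 / 2) ^ 2 + (1 - (N : ℝ) + n) * (2 * n + 2 * b - 2 * N + 1) - n)
            • Lag n
          + (-((n : ℝ) - N) * (2 * b - 2 * N + n)) • Lag (n - 1) :=
  stmt_11_general b N α hα Lag hode hrec hder Lop hLop
end

section
/- Let α ∈ ℂ, α ≠ ±1, c ∈ ℂ, m ∈ ℝ, and let L be the operator L f(y) = (y−1)(y+1)(y−α) f''(y) + (1/2)[(y+1)(y−α) + (y−1)(y−α) + (y−1)(y+1)] f'(y) − (1/4) m(m+1)(y + c) f(y). Then the Chebyshev polynomials of the first kind T_n tridiagonalize L: for n ≥ 1, L T_n = (1/8)(2n−m)(2n+m+1) T_{n+1} + (−α n² − (1/4) m(m+1) c) T_n + (1/8)(2n+m)(2n−m−1) T_{n−1}, and L T_0 = −(1/4) m(m+1) T_1 − (1/4) m(m+1) c T_0. -/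
/-!
With `P = (X - 1)(X + 1)(X - α)`, the operator is `P f'' + ½ P' f' - ¼ m(m+1)(X + c) f`.
On `T_n` the Chebyshev equation `(1 - X²) T_n'' = X T_n' - n² T_n` collapses the first two
terms to `n² (X - α) T_n + ½ (X² - 1) T_n'`, and both `2 X T_n = T_{n+1} + T_{n-1}` and
`2 (1 - X²) T_n' = n (T_{n-1} - T_{n+1})` are tridiagonal. The resulting formula holds for
every `n : ℤ`; at `n = 0` it is the second claim, since `T_{-1} = T_1`.
-/

open Polynomial

namespace Polynomial.Chebyshev

variable {R : Type*} [CommRing R]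

theorem two_mul_X_mul_T (n : ℤ) : 2 * X * T R n = T R (n + 1) + T R (n - 1) := by
  linear_combination -T_add_one R n

theorem two_mul_one_sub_X_sq_mul_derivative_T (n : ℤ) :
    2 * (1 - X ^ 2) * derivative (T R n) = (n : R[X]) * (T R (n - 1) - T R (n + 1)) := by
  have h := one_sub_X_sq_mul_derivative_T_eq_poly_in_T (R := R) (n - 1)
  rw [sub_add_cancel] at h
  push_cast at h
  linear_combination 2 * h + (n : R[X]) * T_add_one R n

end Polynomial.Chebyshev

section Lame

variable {K : Type*} [Field K] [CharZero K]

noncomputable def lameOp (α c m : K) (p : K[X]) : K[X] :=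
  (X - 1) * (X + 1) * (X - C α) * derivative (derivative p)
    + C (1 / 2 : K) * ((X + 1) * (X - C α) + (X - 1) * (X - C α) + (X - 1) * (X + 1))
      * derivative p
    - C ((1 / 4 : K) * (m * (m + 1))) * (X + C c) * p

open Chebyshev in
theorem lameOp_T (α c m : K) (n : ℤ) :
    lameOp α c m (T K n)
      = ((1 / 8 : K) * (2 * n - m) * (2 * n + m + 1)) • T K (n + 1)
        + (-α * n ^ 2 - (1 / 4 : K) * (m * (m + 1)) * c) • T K n
        + ((1 / 8 : K) * (2 * n + m) * (2 * n - m - 1)) • T K (n - 1) := by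
  refine Polynomial.funext fun x => ?_
  have hrec := congrArg (eval x) (two_mul_X_mul_T (R := K) n)
  have hder := congrArg (eval x) (two_mul_one_sub_X_sq_mul_derivative_T (R := K) n)
  have hode :=
    congrArg (eval x) (one_sub_X_sq_mul_derivative_derivative_T_eq_poly_in_T (R := K) n)
  simp only [lameOp, eval_add, eval_sub, eval_mul, eval_smul, smul_eq_mul, eval_X, eval_one,
    eval_C, eval_pow, eval_intCast, eval_ofNat,
    Function.iterate_succ_apply, Function.iterate_zero_apply] at hrec hder hode ⊢
  linear_combination -(x - α) * hode - (1 / 4 : K) * hder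
    + ((n : K) ^ 2 / 2 - m * (m + 1) / 8) * hrec

end Lame

theorem stmt_15_general
    (α : ℂ) (c : ℂ) (m : ℝ)
    (Lop : Polynomial ℂ → Polynomial ℂ)
    (hLop : ∀ p : Polynomial ℂ,
      Lop p = (X - 1) * (X + 1) * (X - Polynomial.C α) * derivative (derivative p)
        + Polynomial.C (1 / 2 : ℂ)
          * ((X + 1) * (X - Polynomial.C α) + (X - 1) * (X - Polynomial.C α)
              + (X - 1) * (X + 1)) * derivative p
        - Polynomial.C ((1 / 4 : ℂ) * (m * (m + 1))) * (X + Polynomial.C c) * p) :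
    (∀ n : ℕ, 1 ≤ n →
      Lop (Chebyshev.T ℂ n)
        = ((1 / 8 : ℂ) * (2 * n - m) * (2 * n + m + 1)) • Chebyshev.T ℂ (n + 1)
          + (-α * n ^ 2 - (1 / 4 : ℂ) * (m * (m + 1)) * c) • Chebyshev.T ℂ n
          + ((1 / 8 : ℂ) * (2 * n + m) * (2 * n - m - 1)) • Chebyshev.T ℂ (n - 1)) ∧
    Lop (Chebyshev.T ℂ 0)
      = (-(1 / 4 : ℂ) * (m * (m + 1))) • Chebyshev.T ℂ 1
        + (-(1 / 4 : ℂ) * (m * (m + 1)) * c) • Chebyshev.T ℂ 0 := by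
  obtain rfl : Lop = lameOp α c (m : ℂ) := funext hLop
  refine ⟨fun n _ => mod_cast lameOp_T α c (m : ℂ) n, ?_⟩
  rw [lameOp_T, zero_sub, Chebyshev.T_neg, zero_add]
  module

/-- The Chebyshev polynomials of the first kind tridiagonalize the (algebraic form of
the) Lamé operator
`L f = (y-1)(y+1)(y-α) f'' + ½[(y+1)(y-α)+(y-1)(y-α)+(y-1)(y+1)] f' − ¼ m(m+1)(y+c) f`. -/
theorem stmt_15
    (α : ℂ) (hα : α ≠ 1 ∧ α ≠ -1) (c : ℂ) (m : ℝ)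
    (Lop : Polynomial ℂ → Polynomial ℂ)
    (hLop : ∀ p : Polynomial ℂ,
      Lop p = (X - 1) * (X + 1) * (X - Polynomial.C α) * derivative (derivative p)
        + Polynomial.C (1 / 2 : ℂ)
          * ((X + 1) * (X - Polynomial.C α) + (X - 1) * (X - Polynomial.C α)
              + (X - 1) * (X + 1)) * derivative p
        - Polynomial.C ((1 / 4 : ℂ) * (m * (m + 1))) * (X + Polynomial.C c) * p) :
    (∀ n : ℕ, 1 ≤ n →
      Lop (Chebyshev.T ℂ n)
        = ((1 / 8 : ℂ) * (2 * n - m) * (2 * n + m + 1)) • Chebyshev.T ℂ (n + 1)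
          + (-α * n ^ 2 - (1 / 4 : ℂ) * (m * (m + 1)) * c) • Chebyshev.T ℂ n
          + ((1 / 8 : ℂ) * (2 * n + m) * (2 * n - m - 1)) • Chebyshev.T ℂ (n - 1)) ∧
    Lop (Chebyshev.T ℂ 0)
      = (-(1 / 4 : ℂ) * (m * (m + 1))) • Chebyshev.T ℂ 1
        + (-(1 / 4 : ℂ) * (m * (m + 1)) * c) • Chebyshev.T ℂ 0 :=
  stmt_15_general α c m Lop hLop
end

section
/- Let m = 2k with k ∈ ℕ, and let L be the Lamé-type operator acting tridiagonally on Chebyshev polynomials via L T_n = (1/8)(2n−2k)(2n+2k+1) T_{n+1} + (−α n² − (1/4)·2k(2k+1)c) T_n + (1/8)(2n+2k)(2n−2k−1) T_{n−1} for n ≥ 1 and L T_0 = −(1/4)2k(2k+1) T_1 − (1/4)2k(2k+1)c T_0. Then the (k+1)-dimensional space spanned by T_0, …, T_k is invariant under L. -/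
open Polynomial Submodule

namespace Polynomial.Chebyshev

variable (R : Type*) [CommRing R]

noncomputable abbrev spanT (k : ℕ) : Submodule R R[X] :=
  span R (Set.range fun i : Fin (k + 1) => T R (i : ℕ))

variable {R}

theorem T_mem_spanT {k : ℕ} {j : ℤ} (h0 : 0 ≤ j) (hj : j ≤ k) : T R j ∈ spanT R k := by
  lift j to ℕ using h0
  exact subset_span ⟨⟨j, by omega⟩, rfl⟩

theorem smul_T_mem_spanT {k : ℕ} {j : ℤ} {a : R} (h0 : 0 ≤ j) (h : j ≤ k ∨ a = 0) :
    a • T R j ∈ spanT R k := by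
  rcases h with hj | rfl
  · exact smul_mem _ a (T_mem_spanT h0 hj)
  · rw [zero_smul]
    exact zero_mem _

end Polynomial.Chebyshev

open Polynomial.Chebyshev in
/-- For `m = 2k` even, the Lamé-type operator acting tridiagonally on the Chebyshev
polynomials leaves the `(k+1)`-dimensional space spanned by `T_0, …, T_k` invariant. -/
theorem stmt_17
    (k : ℕ) (α c : ℂ)
    (L : Polynomial ℂ →ₗ[ℂ] Polynomial ℂ)
    (hrec : ∀ n : ℕ, 1 ≤ n →
      L (Chebyshev.T ℂ n)
        = ((1 / 8 : ℂ) * (2 * n - 2 * k) * (2 * n + 2 * k + 1)) • Chebyshev.T ℂ (n + 1)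
          + (-α * n ^ 2 - (1 / 4 : ℂ) * (2 * k * (2 * k + 1)) * c) • Chebyshev.T ℂ n
          + ((1 / 8 : ℂ) * (2 * n + 2 * k) * (2 * n - 2 * k - 1)) • Chebyshev.T ℂ (n - 1))
    (hrec0 : L (Chebyshev.T ℂ 0)
      = (-(1 / 4 : ℂ) * (2 * k * (2 * k + 1))) • Chebyshev.T ℂ 1
        + (-(1 / 4 : ℂ) * (2 * k * (2 * k + 1)) * c) • Chebyshev.T ℂ 0) :
    ∀ p ∈ Submodule.span ℂ (Set.range fun i : Fin (k + 1) => Chebyshev.T ℂ (i : ℕ)),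
      L p ∈ Submodule.span ℂ (Set.range fun i : Fin (k + 1) => Chebyshev.T ℂ (i : ℕ)) := by
  intro p hp
  refine (span_le (p := (spanT ℂ k).comap L)).mpr ?_ hp
  rintro _ ⟨⟨n, hnk⟩, rfl⟩
  change L (T ℂ n) ∈ spanT ℂ k
  rcases Nat.eq_zero_or_pos n with rfl | hn
  · rw [Nat.cast_zero, hrec0]
    refine add_mem (smul_T_mem_spanT zero_le_one ?_) (smul_T_mem_spanT le_rfl (by omega))
    rcases Nat.eq_zero_or_pos k with rfl | hk
    · right; simp
    · left; exact_mod_cast hk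
  · rw [hrec n hn]
    refine add_mem (add_mem (smul_T_mem_spanT (by omega) ?_) (smul_T_mem_spanT (by omega) ?_))
      (smul_T_mem_spanT (by omega) (by omega))
    · -- the coefficient `2n - 2k` of `T_{n+1}` kills the only term that could leave the span
      rcases Nat.lt_or_ge n k with hlt | hge
      · left; exact_mod_cast hlt
      · right; obtain rfl : n = k := by omega
        simp
    · left; exact_mod_cast Nat.lt_succ_iff.mp hnk
end
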